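/- Let G be an abelian bi-Δ-group and m ≥ 1, and suppose there exists a retraction π_m : 𝔥_m G → Z_m G, i.e., a group homomorphism with π_m(x) = x for all x ∈ Z_m G. Then for every n ≥ m the endomorphism e_m^{(n)} = H_{m,n} ∘ i_m ∘ π_m ∘ p_{m,n} of 𝔥_n G (where i_m : Z_m G ↪ 𝔥_m G is the inclusion) is idempotent: e_m^{(n)} ∘ e_m^{(n)} = e_m^{(n)}. -/

import Mathlib

universe u

section

variable (G : ℕ → Type u) [∀ n, AddCommGroup (G n)]
variable (d : ∀ n : ℕ, ℕ → (G (n + 1) →+ G n))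
variable (δ : ∀ n : ℕ, ℕ → (G n →+ G (n + 1)))

/-- The axioms of an (abelian, additively written) bi-Δ-group: a sequence of groups `G n`
with faces `d n j : G (n+1) →+ G n` (for `j ≤ n+1`) and cofaces
`δ n i : G n →+ G (n+1)` (for `i ≤ n+1`), satisfying the simplicial-type identities. -/
structure IsBiDelta : Prop where
  face_face : ∀ n i j : ℕ, i ≤ j → j ≤ n + 1 → ∀ x : G (n + 2),
    d n i (d (n + 1) (j + 1) x) = d n j (d (n + 1) i x)
  coface_coface : ∀ n i j : ℕ, j ≤ i → i ≤ n + 1 → ∀ x : G n,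
    δ (n + 1) j (δ n i x) = δ (n + 1) (i + 1) (δ n j x)
  face_coface_lt : ∀ n i j : ℕ, j ≤ i → i ≤ n + 1 → ∀ x : G (n + 1),
    d (n + 1) j (δ (n + 1) (i + 1) x) = δ n i (d n j x)
  face_coface_eq : ∀ n i : ℕ, i ≤ n + 1 → ∀ x : G n, d n i (δ n i x) = x
  face_coface_gt : ∀ n i j : ℕ, i ≤ j → j ≤ n + 1 → ∀ x : G (n + 1),
    d (n + 1) (j + 1) (δ (n + 1) i x) = δ n i (d n j x)

/-- The `n`-th Cohen group `𝔥_n G = {x ∈ G_n : d_0 x = d_1 x = ⋯ = d_n x}`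
(with `𝔥_0 G = G_0`), as a subgroup of `G n`. -/
def cohenAll : ∀ n : ℕ, AddSubgroup (G n)
  | 0 => ⊤
  | m + 1 =>
    { carrier := { x : G (m + 1) | ∀ j, j ≤ m + 1 → d m j x = d m 0 x }
      add_mem' := fun {a b} ha hb j hj => by
        simp only [Set.mem_setOf_eq] at ha hb ⊢
        rw [map_add, map_add, ha j hj, hb j hj]
      zero_mem' := fun j hj => by simp
      neg_mem' := fun {a} ha j hj => by
        simp only [Set.mem_setOf_eq] at ha ⊢
        rw [map_neg, map_neg, ha j hj] }

/-- The `n`-th Moore cycle group `Z_n G = ⋂_{j=0}^n ker d_j` (with `Z_0 G = G_0`),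
as a subgroup of `G n`. -/
def mooreAll : ∀ n : ℕ, AddSubgroup (G n)
  | 0 => ⊤
  | m + 1 =>
    { carrier := { x : G (m + 1) | ∀ j, j ≤ m + 1 → d m j x = 0 }
      add_mem' := fun {a b} ha hb j hj => by
        simp only [Set.mem_setOf_eq] at ha hb ⊢
        rw [map_add, ha j hj, hb j hj, add_zero]
      zero_mem' := fun j hj => by simp
      neg_mem' := fun {a} ha j hj => by
        simp only [Set.mem_setOf_eq] at ha ⊢
        rw [map_neg, ha j hj, neg_zero] }

/-- Iterated cofaces `d^{c(r-1)} d^{c(r-2)} ⋯ d^{c(0)}(x)` along a tuple `c` of coface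
indices (`c 0` is applied first, at level `k`). -/
def iterCoface (k : ℕ) : ∀ r : ℕ, (Fin r → ℕ) → G k → G (k + r)
  | 0, _, x => x
  | r + 1, c, x => δ (k + r) (c (Fin.last r)) (iterCoface k r (fun i => c i.castSucc) x)

open Classical in
/-- The James–Hopf homomorphism `H_{k,n} : G_k → G_n` (`n = k + r`): the sum, over all
strictly increasing tuples `0 ≤ i_1 < i_2 < ⋯ < i_{n-k} ≤ n`, of
`d^{i_{n-k}} d^{i_{n-k-1}} ⋯ d^{i_1}(x)`. -/
noncomputable def jamesHopf (k r : ℕ) (x : G k) : G (k + r) :=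
  ∑ c ∈ Finset.univ.filter (fun c : Fin r → Fin (k + r + 1) => StrictMono c),
    iterCoface G δ k r (fun i => (c i : ℕ)) x

/-- `σ_{m+1} = H_{m,m+1} = Σ_{i=0}^{m+1} d^i : G m →+ G (m+1)` (as a function). -/
def sigmaMap (m : ℕ) (x : G m) : G (m + 1) :=
  ∑ i ∈ Finset.range (m + 2), δ m i x

/-- The composite `σ_{s+r} ∘ σ_{s+r-1} ∘ ⋯ ∘ σ_{s+1} : G s → G (s+r)`. -/
def sigmaIter (s : ℕ) : ∀ r : ℕ, G s → G (s + r)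
  | 0, x => x
  | r + 1, x => sigmaMap G δ (s + r) (sigmaIter s r x)

/-- The `r`-fold iterate of the zeroth face `d_0 : G (m+r) → G m`,
i.e. `p_{m+1} ∘ p_{m+2} ∘ ⋯ ∘ p_{m+r}` on Cohen groups. -/
def dIter (m : ℕ) : ∀ r : ℕ, G (m + r) → G m
  | 0, x => x
  | r + 1, x => dIter m r (d (m + r) 0 x)

end

/-! For `z` with `d₀ z = 0`, `d₀ (H_{m,n+1} z) = H_{m,n} z`: in the sum defining `H_{m,n+1}`, a
summand whose first coface is `d⁰` loses it (as `d₀ d⁰ = id`, and `d₀` moves past the remaining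
cofaces lowering their indices by one), which reindexes these summands to those of `H_{m,n}`,
while in every other summand `d₀` moves past all cofaces and meets `d₀ z = 0`. Hence
`p_{m,n} ∘ H_{m,n}` is the identity on `Z_m G`, and
`e ∘ e = H ∘ π ∘ (p ∘ H) ∘ π ∘ p = H ∘ π ∘ π ∘ p = e` because `π` fixes `Z_m G`. -/

theorem strictMono_cons_zero_succ {r N : ℕ} {c : Fin r → Fin N} (hc : StrictMono c) :
    StrictMono (Fin.cons 0 fun i => (c i).succ : Fin (r + 1) → Fin (N + 1)) :=
  Fin.strictMono_cons.2 ⟨fun _ => Fin.succ_pos _, Fin.strictMono_succ.comp hc⟩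

theorem castSucc_le_of_strictMono {r N : ℕ} {c : Fin (r + 2) → ℕ} (hc : StrictMono c)
    (hN : ∀ i, c i ≤ N + 1) (i : Fin (r + 1)) : c i.castSucc ≤ N := by
  have := hc (Fin.castSucc_lt_last i)
  have := hN (Fin.last (r + 1))
  omega

open Classical in
theorem sum_strictMono_of_head_eq_zero {M : Type*} [AddCommMonoid M] {r N : ℕ}
    (f : (Fin (r + 1) → Fin (N + 2)) → M) :
    ∑ c ∈ (Finset.univ.filter fun c => StrictMono c).filter (fun c => c 0 = 0), f c =
      ∑ c ∈ Finset.univ.filter (fun c : Fin r → Fin (N + 1) => StrictMono c),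
        f (Fin.cons 0 fun i => (c i).succ) := by
  symm
  refine Finset.sum_nbij' (fun c => Fin.cons 0 fun i => (c i).succ)
    (fun c i => ⟨c i.succ - 1, by have := (c i.succ).isLt; omega⟩) ?_ ?_ ?_ ?_ fun _ _ => rfl
  · intro c hc
    simp only [Finset.mem_filter, Finset.mem_univ, true_and] at hc ⊢
    exact ⟨strictMono_cons_zero_succ hc, rfl⟩
  · intro c hc
    simp only [Finset.mem_filter, Finset.mem_univ, true_and] at hc ⊢
    intro i j hij
    have := hc.1 (Fin.succ_lt_succ_iff.2 hij)
    have := hc.1 (Fin.succ_pos i)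
    simp only [Fin.lt_def, hc.2, Fin.val_zero] at *
    omega
  · intro c _
    funext i
    ext
    simp
  · intro c hc
    simp only [Finset.mem_filter, Finset.mem_univ, true_and] at hc
    funext i
    induction i using Fin.cases with
    | zero => exact hc.2.symm
    | succ i =>
      have := hc.1 (Fin.succ_pos i)
      ext
      simp only [Fin.lt_def, hc.2, Fin.val_zero, Fin.cons_succ, Fin.val_succ] at *
      omega

section

variable {G : ℕ → Type u} [∀ n, AddCommGroup (G n)]
  {d : ∀ n : ℕ, ℕ → (G (n + 1) →+ G n)} {δ : ∀ n : ℕ, ℕ → (G n →+ G (n + 1))}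

theorem iterCoface_succ (k r : ℕ) (c : Fin (r + 1) → ℕ) (x : G k) :
    iterCoface G δ k (r + 1) c x =
      δ (k + r) (c (Fin.last r)) (iterCoface G δ k r (fun i => c i.castSucc) x) :=
  rfl

theorem jamesHopf_zero (k : ℕ) (z : G k) : jamesHopf G δ k 0 z = z := by
  rw [jamesHopf, Finset.filter_true_of_mem fun c _ i => i.elim0, Fintype.sum_unique]
  rfl

namespace IsBiDelta

theorem face_zero_coface_of_pos (h : IsBiDelta G d δ) {n i : ℕ} (hi : 0 < i)
    (hin : i ≤ n + 2) (y : G (n + 1)) :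
    d (n + 1) 0 (δ (n + 1) i y) = δ n (i - 1) (d n 0 y) := by
  obtain ⟨i, rfl⟩ : ∃ j, i = j + 1 := ⟨i - 1, by omega⟩
  exact h.face_coface_lt n i 0 i.zero_le (by omega) y

theorem face_zero_iterCoface_eq_zero (h : IsBiDelta G d δ) {k : ℕ} {z : G (k + 1)}
    (hz : d k 0 z = 0) :
    ∀ (r : ℕ) (c : Fin (r + 1) → ℕ), StrictMono c → (∀ i, 0 < c i) →
      (∀ i, c i ≤ k + r + 2) → d (k + 1 + r) 0 (iterCoface G δ (k + 1) (r + 1) c z) = 0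
  | 0, c, _, hpos, hle => by
    rw [iterCoface_succ, h.face_zero_coface_of_pos (hpos _) (hle _)]
    exact (congrArg _ hz).trans (map_zero _)
  | r + 1, c, hc, hpos, hle => by
    rw [iterCoface_succ]
    refine (h.face_zero_coface_of_pos (n := k + 1 + r) (hpos _) (by grind) _).trans ?_
    rw [face_zero_iterCoface_eq_zero h hz r (fun i => c i.castSucc)
      (hc.comp Fin.strictMono_castSucc) (fun _ => hpos _) (castSucc_le_of_strictMono hc hle),
      map_zero]

theorem face_zero_iterCoface_of_head_eq_zero (h : IsBiDelta G d δ) {k : ℕ} (z : G (k + 1)) :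
    ∀ (r : ℕ) (c : Fin (r + 1) → ℕ), StrictMono c → c 0 = 0 → (∀ i, c i ≤ k + r + 2) →
      d (k + 1 + r) 0 (iterCoface G δ (k + 1) (r + 1) c z) =
        iterCoface G δ (k + 1) r (fun i => c i.succ - 1) z
  | 0, c, _, hc0, _ => by
    rw [iterCoface_succ, Fin.last_zero, hc0]
    exact h.face_coface_eq (k + 1) 0 (Nat.zero_le _) z
  | r + 1, c, hc, hc0, hle => by
    have hpos : 0 < c (Fin.last (r + 1)) := hc0 ▸ hc Fin.last_pos
    rw [iterCoface_succ]
    refine (h.face_zero_coface_of_pos (n := k + 1 + r) hpos (by grind) _).trans ?_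
    rw [face_zero_iterCoface_of_head_eq_zero h z r (fun i => c i.castSucc)
      (hc.comp Fin.strictMono_castSucc) hc0 (castSucc_le_of_strictMono hc hle), iterCoface_succ]
    simp only [Fin.succ_last, Fin.succ_castSucc]

theorem face_zero_jamesHopf_succ (h : IsBiDelta G d δ) {k : ℕ} {z : G (k + 1)}
    (hz : d k 0 z = 0) (r : ℕ) :
    d (k + 1 + r) 0 (jamesHopf G δ (k + 1) (r + 1) z) = jamesHopf G δ (k + 1) r z := by
  classical
  rw [jamesHopf, map_sum, ← Finset.sum_filter_add_sum_filter_not _ (fun c => c 0 = 0)]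
  have hle (c : Fin (r + 1) → Fin (k + 1 + (r + 1) + 1)) (i : Fin (r + 1)) :
      (c i : ℕ) ≤ k + r + 2 := by
    have := (c i).isLt
    omega
  have hvanish : ∀ c ∈ (Finset.univ.filter fun c : Fin (r + 1) → Fin (k + 1 + (r + 1) + 1) =>
      StrictMono c).filter (fun c => ¬ c 0 = 0),
      d (k + 1 + r) 0 (iterCoface G δ (k + 1) (r + 1) (fun i => c i) z) = 0 := by
    intro c hc
    simp only [Finset.mem_filter, Finset.mem_univ, true_and] at hc
    refine h.face_zero_iterCoface_eq_zero hz r _ (fun _ _ hab => hc.1 hab) (fun i => ?_) (hle c)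
    exact (Fin.pos_iff_ne_zero.2 hc.2).trans_le (hc.1.monotone (Fin.zero_le i))
  rw [Finset.sum_eq_zero hvanish, add_zero]
  refine (sum_strictMono_of_head_eq_zero (N := k + 1 + r) _).trans
    (Finset.sum_congr rfl fun c hc => ?_)
  simp only [Finset.mem_filter, Finset.mem_univ, true_and] at hc
  rw [h.face_zero_iterCoface_of_head_eq_zero z r _
    (fun _ _ hab => strictMono_cons_zero_succ hc hab) rfl (hle _)]
  simp

theorem dIter_jamesHopf (h : IsBiDelta G d δ) {k : ℕ} {z : G (k + 1)} (hz : d k 0 z = 0) :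
    ∀ r : ℕ, dIter G d (k + 1) r (jamesHopf G δ (k + 1) r z) = z
  | 0 => jamesHopf_zero (k + 1) z
  | r + 1 => by
    rw [dIter, face_zero_jamesHopf_succ h hz, dIter_jamesHopf h hz r]

end IsBiDelta

end

theorem stmt15_general (G : ℕ → Type u) [∀ n, AddCommGroup (G n)]
    (d : ∀ n : ℕ, ℕ → (G (n + 1) →+ G n)) (δ : ∀ n : ℕ, ℕ → (G n →+ G (n + 1)))
    (h : IsBiDelta G d δ) (a r : ℕ)
    (π : ↥(cohenAll G d (a + 1)) →+ ↥(mooreAll G d (a + 1)))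
    (hπ : ∀ x : ↥(cohenAll G d (a + 1)), (x : G (a + 1)) ∈ mooreAll G d (a + 1) →
      ((π x : ↥(mooreAll G d (a + 1))) : G (a + 1)) = (x : G (a + 1)))
    (x : G (a + 1 + r))
    (h1 : dIter G d (a + 1) r x ∈ cohenAll G d (a + 1))
    (h3 : dIter G d (a + 1) r
        (jamesHopf G δ (a + 1) r
          ((π ⟨dIter G d (a + 1) r x, h1⟩ : ↥(mooreAll G d (a + 1))) : G (a + 1)))
        ∈ cohenAll G d (a + 1)) :
    jamesHopf G δ (a + 1) r
        ((π ⟨dIter G d (a + 1) r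
            (jamesHopf G δ (a + 1) r
              ((π ⟨dIter G d (a + 1) r x, h1⟩ : ↥(mooreAll G d (a + 1))) : G (a + 1))),
          h3⟩ : ↥(mooreAll G d (a + 1))) : G (a + 1))
      = jamesHopf G δ (a + 1) r
          ((π ⟨dIter G d (a + 1) r x, h1⟩ : ↥(mooreAll G d (a + 1))) : G (a + 1)) := by
  have hpH : dIter G d (a + 1) r (jamesHopf G δ (a + 1) r (π ⟨_, h1⟩ : G (a + 1))) =
      π ⟨_, h1⟩ :=
    h.dIter_jamesHopf ((π _).2 0 (Nat.zero_le _)) r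
  have hZ : dIter G d (a + 1) r (jamesHopf G δ (a + 1) r (π ⟨_, h1⟩ : G (a + 1))) ∈
      mooreAll G d (a + 1) :=
    hpH.symm ▸ (π _).2
  rw [hπ ⟨_, h3⟩ hZ]
  exact congrArg _ hpH

/-- Let `G` be an abelian bi-Δ-group, `m = a + 1 ≥ 1`, `n = m + r ≥ m`,
and suppose `π : 𝔥_m G → Z_m G` is a homomorphism restricting to the identity on
`Z_m G`. Then the endomorphism `e = H_{m,n} ∘ i_m ∘ π ∘ p_{m,n}` of `𝔥_n G` is
idempotent: `e (e x) = e x` for every `x ∈ 𝔥_n G`. (The membership proofs `h1`, `h3`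
needed to apply `π` are consequences of the bi-Δ axioms and are taken as arguments.) -/
theorem stmt15 (G : ℕ → Type u) [∀ n, AddCommGroup (G n)]
    (d : ∀ n : ℕ, ℕ → (G (n + 1) →+ G n)) (δ : ∀ n : ℕ, ℕ → (G n →+ G (n + 1)))
    (h : IsBiDelta G d δ) (a r : ℕ)
    (π : ↥(cohenAll G d (a + 1)) →+ ↥(mooreAll G d (a + 1)))
    (hπ : ∀ x : ↥(cohenAll G d (a + 1)), (x : G (a + 1)) ∈ mooreAll G d (a + 1) →
      ((π x : ↥(mooreAll G d (a + 1))) : G (a + 1)) = (x : G (a + 1)))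
    (x : G (a + 1 + r)) (hx : x ∈ cohenAll G d (a + 1 + r))
    (h1 : dIter G d (a + 1) r x ∈ cohenAll G d (a + 1))
    (h3 : dIter G d (a + 1) r
        (jamesHopf G δ (a + 1) r
          ((π ⟨dIter G d (a + 1) r x, h1⟩ : ↥(mooreAll G d (a + 1))) : G (a + 1)))
        ∈ cohenAll G d (a + 1)) :
    jamesHopf G δ (a + 1) r
        ((π ⟨dIter G d (a + 1) r
            (jamesHopf G δ (a + 1) r
              ((π ⟨dIter G d (a + 1) r x, h1⟩ : ↥(mooreAll G d (a + 1))) : G (a + 1))),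
          h3⟩ : ↥(mooreAll G d (a + 1))) : G (a + 1))
      = jamesHopf G δ (a + 1) r
          ((π ⟨dIter G d (a + 1) r x, h1⟩ : ↥(mooreAll G d (a + 1))) : G (a + 1)) :=
  stmt15_general G d δ h a r π hπ x h1 h3
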